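/- Let p ≥ 1 and r ≥ s ≥ 1 be integers and let G be the graph ℋ(p,r,s) on n = p + r + s + 2 vertices. Then q₂(G) > d₂(G), where q₂(G) is the second largest eigenvalue (with multiplicity) of the signless Laplacian Q(G) and d₂(G) is the second largest vertex degree of G (here d₂(G) = p + s). -/

import Mathlib

/-!
The partition `{u}, {v}, P, R, S` of `ℋ(p,r,s)` is equitable, so `Q` maps vectors constant on
the blocks to such vectors, acting through a `5 × 5` quotient matrix. The block vectors
`X = (p + s) e_u + 𝟙_R` and `Y = (p + s) e_v + 𝟙_S` have disjoint supports with no edge between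
them, hence are orthogonal both for the dot product and for `Q`, and each has Rayleigh quotient
greater than `p + s`. By the easy half of Courant–Fischer, `Q` then has two eigenvalues greater
than `p + s`, so `q₂ > p + s`. On the other hand every vertex except `u` has degree at most
`p + s`, so `d₂ ≤ p + s`.
-/

open Matrix

/-- The signless Laplacian matrix `Q(G) = D + A` of a simple graph, over `ℝ`. -/
def sLapMatrix {m : ℕ} (G : SimpleGraph (Fin m)) [DecidableRel G.Adj] :
    Matrix (Fin m) (Fin m) ℝ :=
  G.degMatrix ℝ + G.adjMatrix ℝ

/-- `q` lists the eigenvalues of `A` (with multiplicity) in non-increasing order. -/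
def IsEigSeq {m : ℕ} (A : Matrix (Fin m) (Fin m) ℝ) (q : Fin m → ℝ) : Prop :=
  Antitone q ∧ ∃ (hA : A.IsHermitian) (σ : Equiv.Perm (Fin m)),
    ∀ i, q i = hA.eigenvalues (σ i)

/-- `d` lists the degrees of `G` (with multiplicity) in non-increasing order. -/
def IsDegSeq {m : ℕ} (G : SimpleGraph (Fin m)) [DecidableRel G.Adj] (d : Fin m → ℕ) : Prop :=
  Antitone d ∧ ∃ σ : Equiv.Perm (Fin m), ∀ i, d i = G.degree (σ i)

/-- The graph `ℋ(p,r,s)` on `p + r + s + 2` vertices: vertex `0` is `u`, vertex `1` is `v`,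
vertices `2,…,p+1` form `P` (joined to both `u` and `v`), vertices `p+2,…,p+r+1` form `R`
(pendant at `u`), and vertices `p+r+2,…,p+r+s+1` form `S` (pendant at `v`);
`u` and `v` are not adjacent. -/
def HGraph (p r s : ℕ) : SimpleGraph (Fin (p + r + s + 2)) where
  Adj a b :=
    ((a.val = 0 ∧ 2 ≤ b.val ∧ b.val < p + r + 2) ∨
     (a.val = 1 ∧ 2 ≤ b.val ∧ (b.val < p + 2 ∨ p + r + 2 ≤ b.val))) ∨
    ((b.val = 0 ∧ 2 ≤ a.val ∧ a.val < p + r + 2) ∨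
     (b.val = 1 ∧ 2 ≤ a.val ∧ (a.val < p + 2 ∨ p + r + 2 ≤ a.val)))
  symm := ⟨by intro a b h; tauto⟩
  loopless := ⟨by
    intro a h
    rcases h with (⟨h1, h2, _⟩ | ⟨h1, h2, _⟩) | (⟨h1, h2, _⟩ | ⟨h1, h2, _⟩) <;> omega⟩

instance HGraph.adjDecidable (p r s : ℕ) : DecidableRel (HGraph p r s).Adj := fun a b =>
  inferInstanceAs (Decidable
    (((a.val = 0 ∧ 2 ≤ b.val ∧ b.val < p + r + 2) ∨
      (a.val = 1 ∧ 2 ≤ b.val ∧ (b.val < p + 2 ∨ p + r + 2 ≤ b.val))) ∨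
     ((b.val = 0 ∧ 2 ≤ a.val ∧ a.val < p + r + 2) ∨
      (b.val = 1 ∧ 2 ≤ a.val ∧ (a.val < p + 2 ∨ p + r + 2 ≤ a.val)))))

theorem OrthonormalBasis.dotProduct_eq_sum {ι n : Type*} [Fintype ι] [Fintype n]
    (b : OrthonormalBasis ι ℝ (EuclideanSpace ℝ n)) (z w : n → ℝ) :
    z ⬝ᵥ w = ∑ i, (b i ⬝ᵥ z) * (b i ⬝ᵥ w) := by
  have := b.sum_inner_mul_inner (WithLp.toLp 2 z) (WithLp.toLp 2 w)
  simp only [EuclideanSpace.inner_eq_star_dotProduct, star_trivial] at this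
  simpa [dotProduct_comm] using this.symm

theorem exists_ne_zero_mul_add_mul_eq_zero (α β : ℝ) :
    ∃ a b : ℝ, (a, b) ≠ 0 ∧ a * α + b * β = 0 := by
  by_cases h : (β, -α) = 0
  · exact ⟨1, 0, by simp, by simp_all⟩
  · exact ⟨β, -α, h, by ring⟩

namespace Matrix.IsHermitian

variable {n : Type*} [Fintype n] [DecidableEq n] {A : Matrix n n ℝ}

theorem dotProduct_mulVec_eq_sum_eigenvalues (hA : A.IsHermitian) (z w : n → ℝ) :
    z ⬝ᵥ A *ᵥ w = ∑ i, hA.eigenvalues i *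
      ((hA.eigenvectorBasis i ⬝ᵥ z) * (hA.eigenvectorBasis i ⬝ᵥ w)) := by
  have hsymm : Aᵀ = A := by simpa using hA.eq
  rw [hA.eigenvectorBasis.dotProduct_eq_sum]
  refine Finset.sum_congr rfl fun i _ => ?_
  rw [dotProduct_mulVec, ← mulVec_transpose, hsymm, hA.mulVec_eigenvectorBasis, smul_dotProduct,
    smul_eq_mul]
  ring

theorem dotProduct_mulVec_le_of_forall (hA : A.IsHermitian) {c : ℝ} {z : n → ℝ}
    (hz : ∀ i, c < hA.eigenvalues i → hA.eigenvectorBasis i ⬝ᵥ z = 0) :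
    z ⬝ᵥ A *ᵥ z ≤ c * (z ⬝ᵥ z) := by
  rw [hA.dotProduct_mulVec_eq_sum_eigenvalues, hA.eigenvectorBasis.dotProduct_eq_sum,
    Finset.mul_sum]
  refine Finset.sum_le_sum fun i _ => ?_
  rcases lt_or_ge c (hA.eigenvalues i) with hi | hi
  · simp [hz i hi]
  · exact mul_le_mul_of_nonneg_right hi (mul_self_nonneg _)

/-- If at most one eigenvalue exceeded `c`, some nonzero vector of the plane spanned by `x` and `y`
would be orthogonal to its eigenvector. -/
theorem exists_ne_lt_eigenvalues_of_forall (hA : A.IsHermitian) {c : ℝ} {x y : n → ℝ}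
    (h : ∀ a b : ℝ, (a, b) ≠ 0 →
      c * ((a • x + b • y) ⬝ᵥ (a • x + b • y)) < (a • x + b • y) ⬝ᵥ A *ᵥ (a • x + b • y)) :
    ∃ i j, i ≠ j ∧ c < hA.eigenvalues i ∧ c < hA.eigenvalues j := by
  by_contra! hle
  set e := hA.eigenvectorBasis
  obtain ⟨a, b, hab, horth⟩ : ∃ a b : ℝ, (a, b) ≠ 0 ∧
      ∀ i, c < hA.eigenvalues i → a * (e i ⬝ᵥ x) + b * (e i ⬝ᵥ y) = 0 := by
    by_cases hex : ∃ i₀, c < hA.eigenvalues i₀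
    · obtain ⟨i₀, hi₀⟩ := hex
      obtain ⟨a, b, hab, h0⟩ := exists_ne_zero_mul_add_mul_eq_zero (e i₀ ⬝ᵥ x) (e i₀ ⬝ᵥ y)
      refine ⟨a, b, hab, fun i hi => ?_⟩
      obtain rfl : i = i₀ := by_contra fun hne => (hle i i₀ hne hi).not_gt hi₀
      exact h0
    · exact ⟨1, 0, by simp, fun i hi => (hex ⟨i, hi⟩).elim⟩
  refine (h a b hab).not_ge (hA.dotProduct_mulVec_le_of_forall fun i hi => ?_)
  simpa [dotProduct_add, dotProduct_smul] using horth i hi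

theorem exists_ne_lt_eigenvalues_of_orthogonal (hA : A.IsHermitian) {c : ℝ} {x y : n → ℝ}
    (hxy : x ⬝ᵥ y = 0) (hAxy : x ⬝ᵥ A *ᵥ y = 0)
    (hx : c * (x ⬝ᵥ x) < x ⬝ᵥ A *ᵥ x) (hy : c * (y ⬝ᵥ y) < y ⬝ᵥ A *ᵥ y) :
    ∃ i j, i ≠ j ∧ c < hA.eigenvalues i ∧ c < hA.eigenvalues j := by
  have hyx : y ⬝ᵥ x = 0 := by rw [dotProduct_comm, hxy]
  have hAyx : y ⬝ᵥ A *ᵥ x = 0 := by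
    rw [dotProduct_mulVec, ← mulVec_transpose, show Aᵀ = A by simpa using hA.eq, dotProduct_comm,
      hAxy]
  refine hA.exists_ne_lt_eigenvalues_of_forall (x := x) (y := y) fun a b hab => ?_
  simp only [mulVec_add, mulVec_smul, add_dotProduct, dotProduct_add, smul_dotProduct,
    dotProduct_smul, smul_eq_mul, hxy, hyx, hAxy, hAyx]
  rcases not_and_or.mp (Prod.mk_eq_zero.not.mp hab) with ha | hb
  · have ha2 : 0 < a ^ 2 := by positivity
    nlinarith [mul_lt_mul_of_pos_left hx ha2, mul_le_mul_of_nonneg_left hy.le (sq_nonneg b)]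
  · have hb2 : 0 < b ^ 2 := by positivity
    nlinarith [mul_lt_mul_of_pos_left hy hb2, mul_le_mul_of_nonneg_left hx.le (sq_nonneg a)]

end Matrix.IsHermitian

theorem IsEigSeq.lt_apply_one {m : ℕ} {A : Matrix (Fin m) (Fin m) ℝ} {q : Fin m → ℝ}
    (hq : IsEigSeq A q) (hm : 1 < m) {c : ℝ}
    (h : ∀ hA : A.IsHermitian, ∃ i j, i ≠ j ∧ c < hA.eigenvalues i ∧ c < hA.eigenvalues j) :
    c < q ⟨1, hm⟩ := by
  obtain ⟨hanti, hA, σ, hσ⟩ := hq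
  obtain ⟨i, j, hij, hi, hj⟩ := h hA
  have hne : σ.symm i ≠ σ.symm j := σ.symm.injective.ne hij
  obtain ⟨k, hk, hck⟩ : ∃ k : Fin m, 1 ≤ (k : ℕ) ∧ c < q k := by
    rcases Nat.eq_zero_or_pos (σ.symm i) with h0 | h0
    · refine ⟨σ.symm j, Nat.pos_of_ne_zero fun h1 => hne (Fin.ext (h0.trans h1.symm)), ?_⟩
      simpa [hσ] using hj
    · exact ⟨σ.symm i, h0, by simpa [hσ] using hi⟩
  exact hck.trans_le (hanti hk)

theorem IsDegSeq.apply_one_le {m : ℕ} {G : SimpleGraph (Fin m)} [DecidableRel G.Adj]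
    {d : Fin m → ℕ} (hd : IsDegSeq G d) (hm : 1 < m) (v₀ : Fin m) {k : ℕ}
    (h : ∀ v, v ≠ v₀ → G.degree v ≤ k) : d ⟨1, hm⟩ ≤ k := by
  obtain ⟨hanti, σ, hσ⟩ := hd
  by_cases h1 : σ ⟨1, hm⟩ = v₀
  · have h0 : σ ⟨0, by omega⟩ ≠ v₀ := fun h0 =>
      absurd (σ.injective (h0.trans h1.symm)) (by simp)
    calc d ⟨1, hm⟩ ≤ d ⟨0, by omega⟩ := hanti (Fin.mk_le_mk.mpr zero_le_one)
      _ ≤ k := hσ _ ▸ h _ h0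
  · exact hσ _ ▸ h _ h1

theorem sLapMatrix_mulVec_apply {m : ℕ} (G : SimpleGraph (Fin m)) [DecidableRel G.Adj]
    (w : Fin m → ℝ) (i : Fin m) :
    (sLapMatrix G *ᵥ w) i = G.degree i * w i + ∑ j ∈ G.neighborFinset i, w j := by
  rw [sLapMatrix, add_mulVec, Pi.add_apply, SimpleGraph.degMatrix_mulVec_apply,
    SimpleGraph.adjMatrix_mulVec_apply]

namespace HGraph

inductive Block
  | u | v | P | R | S

namespace Block

def Adj : Block → Block → Prop
  | u, P | u, R | v, P | v, S | P, u | P, v | R, u | S, v => True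
  | _, _ => False

instance : DecidableRel Adj := fun a b => by cases a <;> cases b <;> unfold Adj <;> infer_instance

end Block

open Block

variable {p r s : ℕ}

def block (p r : ℕ) (k : ℕ) : Block :=
  if k = 0 then u else if k = 1 then v else if k < p + 2 then P else if k < p + r + 2 then R else S

theorem adj_iff (a b : Fin (p + r + s + 2)) :
    (HGraph p r s).Adj a b ↔ Block.Adj (block p r a) (block p r b) := by
  simp only [HGraph, block]
  split_ifs <;> simp only [Block.Adj, iff_true, iff_false] <;> omega

theorem sum_comp_block {M : Type*} [AddCommMonoid M] (g : Block → M) :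
    ∑ i : Fin (p + r + s + 2), g (block p r i) = g u + g v + p • g P + r • g R + s • g S := by
  have hconst : ∀ (a n : ℕ) (B : Block), (∀ x < n, block p r (a + x) = B) →
      ∑ x ∈ Finset.range n, g (block p r (a + x)) = n • g B := fun a n B h => by
    rw [Finset.sum_congr rfl fun x hx => congrArg g (h x (Finset.mem_range.mp hx)),
      Finset.sum_const, Finset.card_range]
  rw [Fin.sum_univ_eq_sum_range (fun k => g (block p r k)),
    show p + r + s + 2 = 2 + p + r + s by omega,
    Finset.sum_range_add, Finset.sum_range_add, Finset.sum_range_add,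
    hconst 2 p P fun x hx => ?_, hconst (2 + p) r R fun x hx => ?_,
    hconst (2 + p + r) s S fun x hx => ?_]
  · simp [Finset.sum_range_succ, block]
  all_goals (simp only [block]; split_ifs <;> first | rfl | omega)

theorem sum_neighborFinset_comp_block {M : Type*} [AddCommMonoid M] (f : Block → M)
    (i : Fin (p + r + s + 2)) :
    ∑ j ∈ (HGraph p r s).neighborFinset i, f (block p r j) =
      (if Block.Adj (block p r i) u then f u else 0)
        + (if Block.Adj (block p r i) v then f v else 0)
        + p • (if Block.Adj (block p r i) P then f P else 0)
        + r • (if Block.Adj (block p r i) R then f R else 0)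
        + s • (if Block.Adj (block p r i) S then f S else 0) := by
  rw [SimpleGraph.neighborFinset_eq_filter, Finset.sum_filter]
  simp only [adj_iff]
  exact sum_comp_block (fun C => if Block.Adj (block p r i) C then f C else 0)

theorem degree_le_of_ne_zero (hp : 1 ≤ p) (hs : 1 ≤ s) {i : Fin (p + r + s + 2)}
    (hi : (i : ℕ) ≠ 0) :
    (HGraph p r s).degree i ≤ p + s := by
  rw [← SimpleGraph.card_neighborFinset_eq_degree, Finset.card_eq_sum_ones,
    sum_neighborFinset_comp_block (fun _ => 1)]
  have : block p r i ≠ u := by unfold block; split_ifs <;> simp_all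
  cases h : block p r i <;> simp_all [Block.Adj] <;> omega

/-- The quotient of the signless Laplacian by the equitable partition `{u}, {v}, P, R, S`. -/
def quotientSLap (p r s : ℕ) (h : Block → ℝ) : Block → ℝ
  | u => (p + r) * h u + p * h P + r * h R
  | v => (p + s) * h v + p * h P + s * h S
  | P => 2 * h P + h u + h v
  | R => h R + h u
  | S => h S + h v

def ofBlock (p r s : ℕ) (h : Block → ℝ) (i : Fin (p + r + s + 2)) : ℝ :=
  h (block p r i)

theorem sLapMatrix_mulVec_ofBlock (h : Block → ℝ) :
    sLapMatrix (HGraph p r s) *ᵥ ofBlock p r s h = ofBlock p r s (quotientSLap p r s h) := by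
  funext i
  rw [sLapMatrix_mulVec_apply]
  simp only [ofBlock]
  rw [← SimpleGraph.card_neighborFinset_eq_degree,
    Finset.card_eq_sum_ones, Nat.cast_sum, Nat.cast_one,
    sum_neighborFinset_comp_block (fun _ => 1), sum_neighborFinset_comp_block h]
  cases block p r i <;> simp [Block.Adj, quotientSLap] <;> ring

theorem dotProduct_ofBlock (g h : Block → ℝ) :
    ofBlock p r s g ⬝ᵥ ofBlock p r s h =
      g u * h u + g v * h v + p * (g P * h P) + r * (g R * h R) + s * (g S * h S) := by
  simpa only [dotProduct, ofBlock, nsmul_eq_mul] using sum_comp_block (fun C => g C * h C)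

def testU (p s : ℕ) : Block → ℝ
  | u => p + s
  | R => 1
  | _ => 0

def testV (p s : ℕ) : Block → ℝ
  | v => p + s
  | S => 1
  | _ => 0

theorem dotProduct_testU_testV : ofBlock p r s (testU p s) ⬝ᵥ ofBlock p r s (testV p s) = 0 := by
  simp [dotProduct_ofBlock, testU, testV]

theorem dotProduct_testU_sLapMatrix_mulVec_testV :
    ofBlock p r s (testU p s) ⬝ᵥ sLapMatrix (HGraph p r s) *ᵥ ofBlock p r s (testV p s) = 0 := by
  simp [sLapMatrix_mulVec_ofBlock, dotProduct_ofBlock, testU, testV, quotientSLap]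

theorem lt_rayleigh_testU (hrs : s ≤ r) (hs : 1 ≤ s) :
    (p + s) * (ofBlock p r s (testU p s) ⬝ᵥ ofBlock p r s (testU p s)) <
      ofBlock p r s (testU p s) ⬝ᵥ sLapMatrix (HGraph p r s) *ᵥ ofBlock p r s (testU p s) := by
  have hr : (1 : ℝ) ≤ r := by exact_mod_cast hs.trans hrs
  have hsr : (s : ℝ) ≤ r := by exact_mod_cast hrs
  -- the difference of the two sides is `(r - s) (p + s)² + r (p + s) + r`
  simp [sLapMatrix_mulVec_ofBlock, dotProduct_ofBlock, testU, quotientSLap]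
  nlinarith [sq_nonneg ((p : ℝ) + s)]

theorem lt_rayleigh_testV (hs : 1 ≤ s) :
    (p + s) * (ofBlock p r s (testV p s) ⬝ᵥ ofBlock p r s (testV p s)) <
      ofBlock p r s (testV p s) ⬝ᵥ sLapMatrix (HGraph p r s) *ᵥ ofBlock p r s (testV p s) := by
  have hs' : (1 : ℝ) ≤ s := by exact_mod_cast hs
  -- the difference of the two sides is `s (p + s) + s`
  simp [sLapMatrix_mulVec_ofBlock, dotProduct_ofBlock, testV, quotientSLap]
  nlinarith

end HGraph

theorem HGraph_q_two_gt_d_two {p r s : ℕ} (hp : 1 ≤ p) (hrs : s ≤ r) (hs : 1 ≤ s)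
    (q : Fin (p + r + s + 2) → ℝ) (hq : IsEigSeq (sLapMatrix (HGraph p r s)) q)
    (d : Fin (p + r + s + 2) → ℕ) (hd : IsDegSeq (HGraph p r s) d) :
    q ⟨1, by omega⟩ > (d ⟨1, by omega⟩ : ℝ) := by
  have hd₂ : d ⟨1, by omega⟩ ≤ p + s := hd.apply_one_le _ ⟨0, by omega⟩ fun i hi =>
    HGraph.degree_le_of_ne_zero hp hs (Fin.val_ne_iff.mpr hi)
  have hq₂ : ((p + s : ℕ) : ℝ) < q ⟨1, by omega⟩ := hq.lt_apply_one _ fun hA => by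
    push_cast
    exact hA.exists_ne_lt_eigenvalues_of_orthogonal HGraph.dotProduct_testU_testV
      HGraph.dotProduct_testU_sLapMatrix_mulVec_testV (HGraph.lt_rayleigh_testU hrs hs)
      (HGraph.lt_rayleigh_testV hs)
  exact (Nat.cast_le.mpr hd₂).trans_lt hq₂
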